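/- arXiv:cs/0510088 — 3 statements merged into one kernel-verified Lean document; each statement's English description precedes it below -/
import Mathlib

section
/- For any nonempty subset B of the Hamming cube {0,1}^d, the sum over S ⊆ {1,...,d} of ε^{2|S|} · (Fourier coefficient of the indicator 1_B at S)^2 is at most (|B|/2^d)^{2/(1+ε²)}, for every ε ∈ [0,1]. -/
/-!
Write `p = 1 + ε²`. Expanding the square and summing over the Walsh characters turns the
left-hand side into the noise stability `E[f(u) f(v)]` of `f = 1_B` under an `ε²`-correlated
pair `(u, v)`. Splitting off one coordinate as `f = g ± h`, noise stability satisfies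
`Stab(f) = Stab(g) + Stab(ε h)`, and induction on `d` gives hypercontractivity
`Stab(f) ≤ (E|f|^p)^(2/p)`: the induction step combines the reverse Minkowski inequality in
`L^(p/2)`, `p/2 ≤ 1`, with the two-point inequality
`(x² + (p - 1) y²)^(p/2) ≤ (|x + y|^p + |x - y|^p) / 2`. For an indicator, `E|f|^p = |B| / 2^d`.
-/

open Finset

/-- Walsh function `W_S(u) = (-1)^{∑_{j∈S} u_j}` on the Hamming cube `{0,1}^d`. -/
noncomputable def walsh (d : ℕ) (S : Finset (Fin d)) (u : Fin d → Bool) : ℝ :=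
  (-1 : ℝ) ^ (S.filter (fun j => u j)).card

/-- Fourier coefficient `f̂(S) = 2^{-d} ∑_u f(u) W_S(u)`. -/
noncomputable def cubeFourier (d : ℕ) (f : (Fin d → Bool) → ℝ) (S : Finset (Fin d)) : ℝ :=
  (1 / 2 ^ d) * ∑ u : Fin d → Bool, f u * walsh d S u

open Real

lemma two_le_rpow_one_add_add_rpow_one_sub {r t : ℝ} (hr : r ≤ 0) (ht : |t| < 1) :
    2 ≤ (1 + t) ^ r + (1 - t) ^ r := by
  obtain ⟨ht₁, ht₂⟩ := abs_lt.mp ht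
  have hA : 0 < (1 + t) ^ r := rpow_pos_of_pos (by linarith) r
  have hB : 0 < (1 - t) ^ r := rpow_pos_of_pos (by linarith) r
  have hAB : 1 ≤ (1 + t) ^ r * (1 - t) ^ r := by
    rw [← mul_rpow (by linarith) (by linarith)]
    exact one_le_rpow_of_pos_of_le_one_of_nonpos (by nlinarith) (by nlinarith [sq_nonneg t]) hr
  nlinarith [sq_nonneg ((1 + t) ^ r - (1 - t) ^ r)]

lemma monotoneOn_Icc_of_hasDerivAt_nonneg {a b : ℝ} {f f' : ℝ → ℝ}
    (hf : ContinuousOn f (Set.Icc a b)) (hf' : ∀ x ∈ Set.Ioo a b, HasDerivAt f (f' x) x)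
    (hf'₀ : ∀ x ∈ Set.Ioo a b, 0 ≤ f' x) : MonotoneOn f (Set.Icc a b) := by
  refine monotoneOn_of_hasDerivWithinAt_nonneg (f' := f') (convex_Icc a b) hf (fun x hx => ?_)
    fun x hx => ?_
  · rw [interior_Icc] at hx ⊢
    exact (hf' x hx).hasDerivWithinAt
  · exact hf'₀ x (interior_Icc (a := a) ▸ hx)

lemma hasDerivAt_rpow_one_add {p x : ℝ} (hx : 1 + x ≠ 0) :
    HasDerivAt (fun y => (1 + y) ^ p) (p * (1 + x) ^ (p - 1)) x := by
  simpa using ((hasDerivAt_id' x).const_add 1).rpow_const (p := p) (Or.inl hx)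

lemma hasDerivAt_rpow_one_sub {p x : ℝ} (hx : 1 - x ≠ 0) :
    HasDerivAt (fun y => (1 - y) ^ p) (-(p * (1 - x) ^ (p - 1))) x := by
  simpa using ((hasDerivAt_id' x).const_sub 1).rpow_const (p := p) (Or.inl hx)

lemma two_add_mul_sq_le_rpow_one_add_add_rpow_one_sub {p t : ℝ} (hp₁ : 1 ≤ p) (hp₂ : p ≤ 2)
    (ht : t ∈ Set.Icc (0 : ℝ) 1) : 2 + p * (p - 1) * t ^ 2 ≤ (1 + t) ^ p + (1 - t) ^ p := by
  have habs : ∀ x ∈ Set.Ioo (0 : ℝ) 1, |x| < 1 := fun x hx =>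
    abs_lt.mpr ⟨by linarith [hx.1], hx.2⟩
  have hadd : ∀ x ∈ Set.Ioo (0 : ℝ) 1, 1 + x ≠ 0 := fun x hx => by linarith [hx.1]
  have hsub : ∀ x ∈ Set.Ioo (0 : ℝ) 1, 1 - x ≠ 0 := fun x hx => by linarith [hx.2]
  have h0 : (0 : ℝ) ∈ Set.Icc (0 : ℝ) 1 := ⟨le_rfl, zero_le_one⟩
  -- The function in `hψ` is the derivative of the one in `hφ`.
  have hψ : MonotoneOn (fun x => p * ((1 + x) ^ (p - 1) - (1 - x) ^ (p - 1)) - 2 * p * (p - 1) * x)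
      (Set.Icc 0 1) := by
    refine monotoneOn_Icc_of_hasDerivAt_nonneg
      (Continuous.continuousOn (by fun_prop (disch := linarith)))
      (fun x hx => ((((hasDerivAt_rpow_one_add (p := p - 1) (hadd x hx)).sub
        (hasDerivAt_rpow_one_sub (hsub x hx))).const_mul p).sub
        ((hasDerivAt_id' x).const_mul (2 * p * (p - 1))))) fun x hx => ?_
    have := two_le_rpow_one_add_add_rpow_one_sub (r := p - 2) (by linarith) (habs x hx)
    rw [show p - 1 - 1 = p - 2 by ring]
    nlinarith [mul_nonneg (by linarith : 0 ≤ p) (by linarith : 0 ≤ p - 1)]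
  have hφ : MonotoneOn (fun x => (1 + x) ^ p + (1 - x) ^ p - p * (p - 1) * x ^ 2)
      (Set.Icc 0 1) := by
    refine monotoneOn_Icc_of_hasDerivAt_nonneg
      (Continuous.continuousOn (by fun_prop (disch := linarith)))
      (fun x hx => (((hasDerivAt_rpow_one_add (hadd x hx)).add
        (hasDerivAt_rpow_one_sub (hsub x hx))).sub
        ((hasDerivAt_pow 2 x).const_mul (p * (p - 1))))) fun x hx => ?_
    have := hψ h0 (Set.Ioo_subset_Icc_self hx) hx.1.le
    norm_num at this ⊢
    linarith
  have := hφ h0 ht ht.1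
  norm_num at this
  linarith

lemma rpow_one_add_mul_sq_le {p t : ℝ} (hp₁ : 1 ≤ p) (hp₂ : p ≤ 2) (ht : |t| ≤ 1) :
    (1 + (p - 1) * t ^ 2) ^ (p / 2) ≤ ((1 + t) ^ p + (1 - t) ^ p) / 2 := by
  have key : 2 + p * (p - 1) * t ^ 2 ≤ (1 + t) ^ p + (1 - t) ^ p := by
    rcases le_total 0 t with h | h
    · exact two_add_mul_sq_le_rpow_one_add_add_rpow_one_sub hp₁ hp₂ ⟨h, (abs_le.mp ht).2⟩
    · have := two_add_mul_sq_le_rpow_one_add_add_rpow_one_sub (t := -t) hp₁ hp₂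
        ⟨neg_nonneg.mpr h, by linarith [(abs_le.mp ht).1]⟩
      rw [neg_sq, ← sub_eq_add_neg, sub_neg_eq_add] at this
      linarith
  calc (1 + (p - 1) * t ^ 2) ^ (p / 2) ≤ 1 + p / 2 * ((p - 1) * t ^ 2) :=
        rpow_one_add_le_one_add_mul_self (by nlinarith) (by linarith) (by linarith)
    _ ≤ ((1 + t) ^ p + (1 - t) ^ p) / 2 := by linarith

lemma abs_rpow_eq_sq_rpow (x p : ℝ) : |x| ^ p = (x ^ 2) ^ (p / 2) := by
  rw [← sq_abs, ← rpow_natCast, ← rpow_mul (abs_nonneg x)]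
  ring_nf

lemma two_point_inequality_of_abs_le {p x y : ℝ} (hp₁ : 1 ≤ p) (hp₂ : p ≤ 2) (h : |y| ≤ |x|) :
    (x ^ 2 + (p - 1) * y ^ 2) ^ (p / 2) ≤ (|x + y| ^ p + |x - y| ^ p) / 2 := by
  rcases eq_or_ne x 0 with rfl | hx
  · obtain rfl : y = 0 := abs_nonpos_iff.mp (by simpa using h)
    simp [zero_rpow (by linarith : p / 2 ≠ 0), zero_rpow (by linarith : p ≠ 0)]
  set t := y / x
  have ht : |t| ≤ 1 := by rwa [abs_div, div_le_one (abs_pos.mpr hx)]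
  obtain ⟨ht₁, ht₂⟩ := abs_le.mp ht
  have hy : y = x * t := by simp only [t]; field_simp
  have hsq : x ^ 2 + (p - 1) * y ^ 2 = x ^ 2 * (1 + (p - 1) * t ^ 2) := by rw [hy]; ring
  have hadd : |x + y| = |x| * (1 + t) := by
    rw [hy, ← mul_one_add, abs_mul, abs_of_nonneg (by linarith : 0 ≤ 1 + t)]
  have hsub : |x - y| = |x| * (1 - t) := by
    rw [hy, ← mul_one_sub, abs_mul, abs_of_nonneg (by linarith : 0 ≤ 1 - t)]
  rw [hsq, hadd, hsub, mul_rpow (sq_nonneg x) (by positivity), ← abs_rpow_eq_sq_rpow,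
    mul_rpow (abs_nonneg x) (by linarith), mul_rpow (abs_nonneg x) (by linarith), ← mul_add,
    mul_div_assoc]
  exact mul_le_mul_of_nonneg_left (rpow_one_add_mul_sq_le hp₁ hp₂ ht) (by positivity)

lemma two_point_inequality {p : ℝ} (hp₁ : 1 ≤ p) (hp₂ : p ≤ 2) (x y : ℝ) :
    (x ^ 2 + (p - 1) * y ^ 2) ^ (p / 2) ≤ (|x + y| ^ p + |x - y| ^ p) / 2 := by
  rcases le_total |y| |x| with h | h
  · exact two_point_inequality_of_abs_le hp₁ hp₂ h
  calc (x ^ 2 + (p - 1) * y ^ 2) ^ (p / 2) ≤ (y ^ 2 + (p - 1) * x ^ 2) ^ (p / 2) := by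
        refine rpow_le_rpow (by nlinarith) ?_ (by linarith)
        nlinarith [sq_abs x, sq_abs y, abs_nonneg x, mul_le_mul h h (abs_nonneg x) (abs_nonneg y)]
    _ ≤ (|y + x| ^ p + |y - x| ^ p) / 2 := two_point_inequality_of_abs_le hp₁ hp₂ h
    _ = (|x + y| ^ p + |x - y| ^ p) / 2 := by rw [add_comm y, abs_sub_comm]

-- The perspective `(a, x) ↦ a (x / a) ^ q` of the concave function `x ↦ x ^ q` is superadditive.
lemma mul_div_rpow_add_mul_div_rpow_le {q a b x y : ℝ} (hq₀ : 0 ≤ q) (hq₁ : q ≤ 1)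
    (ha : 0 < a) (hb : 0 < b) (hx : 0 ≤ x) (hy : 0 ≤ y) :
    a * (x / a) ^ q + b * (y / b) ^ q ≤ (a + b) * ((x + y) / (a + b)) ^ q := by
  have hab : 0 < a + b := add_pos ha hb
  have h := (concaveOn_rpow hq₀ hq₁).2 (Set.mem_Ici.mpr (div_nonneg hx ha.le))
    (Set.mem_Ici.mpr (div_nonneg hy hb.le)) (div_nonneg ha.le hab.le) (div_nonneg hb.le hab.le)
    (by rw [← add_div, div_self hab.ne'])
  have hmid : a / (a + b) * (x / a) + b / (a + b) * (y / b) = (x + y) / (a + b) := by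
    field_simp
  simp only [smul_eq_mul, hmid] at h
  have := mul_le_mul_of_nonneg_left h hab.le
  rwa [mul_add, ← mul_assoc, ← mul_assoc, mul_div_cancel₀ _ hab.ne',
    mul_div_cancel₀ _ hab.ne'] at this

lemma sum_mul_div_rpow_eq_self {ι : Type*} (s : Finset ι) {q γ : ℝ} (hγ : 0 < γ) {Z : ι → ℝ}
    (hZ : ∀ i ∈ s, 0 ≤ Z i) (hγZ : γ ^ q = ∑ i ∈ s, Z i ^ q) :
    ∑ i ∈ s, γ * (Z i / γ) ^ q = γ := by
  rw [← mul_sum, sum_congr rfl fun i hi => div_rpow (hZ i hi) hγ.le q, ← sum_div, ← hγZ,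
    div_self (rpow_pos_of_pos hγ q).ne', mul_one]

lemma add_Lp_le_Lp_add_of_le_one {ι : Type*} (s : Finset ι) {q : ℝ} (hq₀ : 0 < q) (hq₁ : q ≤ 1)
    {X Y : ι → ℝ} (hX : ∀ i ∈ s, 0 ≤ X i) (hY : ∀ i ∈ s, 0 ≤ Y i) :
    (∑ i ∈ s, X i ^ q) ^ (1 / q) + (∑ i ∈ s, Y i ^ q) ^ (1 / q)
      ≤ (∑ i ∈ s, (X i + Y i) ^ q) ^ (1 / q) := by
  have hXY : ∀ i ∈ s, 0 ≤ X i + Y i := fun i hi => add_nonneg (hX i hi) (hY i hi)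
  have mono : ∀ Z : ι → ℝ, (∀ i ∈ s, 0 ≤ Z i) → (∀ i ∈ s, Z i ≤ X i + Y i) →
      (∑ i ∈ s, Z i ^ q) ^ (1 / q) ≤ (∑ i ∈ s, (X i + Y i) ^ q) ^ (1 / q) := fun Z hZ hZXY =>
    rpow_le_rpow (sum_nonneg fun i hi => rpow_nonneg (hZ i hi) q)
      (sum_le_sum fun i hi => rpow_le_rpow (hZ i hi) (hZXY i hi) hq₀.le) (by positivity)
  have hA : 0 ≤ ∑ i ∈ s, X i ^ q := sum_nonneg fun i hi => rpow_nonneg (hX i hi) q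
  have hB : 0 ≤ ∑ i ∈ s, Y i ^ q := sum_nonneg fun i hi => rpow_nonneg (hY i hi) q
  set α := (∑ i ∈ s, X i ^ q) ^ (1 / q) with hαdef
  set β := (∑ i ∈ s, Y i ^ q) ^ (1 / q) with hβdef
  have hαq : α ^ q = ∑ i ∈ s, X i ^ q := by rw [hαdef, one_div, rpow_inv_rpow hA hq₀.ne']
  have hβq : β ^ q = ∑ i ∈ s, Y i ^ q := by rw [hβdef, one_div, rpow_inv_rpow hB hq₀.ne']
  rcases (show 0 ≤ α from rpow_nonneg hA _).eq_or_lt with hα | hα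
  · rw [← hα, zero_add]
    exact mono Y hY fun i hi => le_add_of_nonneg_left (hX i hi)
  rcases (show 0 ≤ β from rpow_nonneg hB _).eq_or_lt with hβ | hβ
  · rw [← hβ, add_zero]
    exact mono X hX fun i hi => le_add_of_nonneg_right (hY i hi)
  have hαβ : 0 < α + β := add_pos hα hβ
  set S := ∑ i ∈ s, (X i + Y i) ^ q
  have key : (α + β) * 1 ≤ (α + β) * (S / (α + β) ^ q) :=
    calc (α + β) * 1 = ∑ i ∈ s, (α * (X i / α) ^ q + β * (Y i / β) ^ q) := by
          rw [mul_one, sum_add_distrib, sum_mul_div_rpow_eq_self s hα hX hαq,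
            sum_mul_div_rpow_eq_self s hβ hY hβq]
      _ ≤ ∑ i ∈ s, (α + β) * ((X i + Y i) / (α + β)) ^ q := sum_le_sum fun i hi =>
          mul_div_rpow_add_mul_div_rpow_le hq₀.le hq₁ hα hβ (hX i hi) (hY i hi)
      _ = (α + β) * (S / (α + β) ^ q) := by
          rw [← mul_sum, sum_div, sum_congr rfl fun i hi => div_rpow (hXY i hi) hαβ.le q]
  have hS : (α + β) ^ q ≤ S :=
    (one_le_div (rpow_pos_of_pos hαβ q)).mp (le_of_mul_le_mul_left key hαβ)
  calc α + β = ((α + β) ^ q) ^ (1 / q) := by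
        rw [one_div, rpow_rpow_inv hαβ.le hq₀.ne']
    _ ≤ S ^ (1 / q) := rpow_le_rpow (rpow_nonneg hαβ.le q) hS (by positivity)

noncomputable def cubeMean (d : ℕ) (f : (Fin d → Bool) → ℝ) : ℝ :=
  (1 / 2 ^ d) * ∑ u, f u

-- The density of a `ρ`-correlated pair `(u, v)` with respect to the uniform measure on pairs.
noncomputable def noiseKernel (d : ℕ) (ρ : ℝ) (u v : Fin d → Bool) : ℝ :=
  ∏ j, if u j = v j then 1 + ρ else 1 - ρ

noncomputable def noiseStability (d : ℕ) (ρ : ℝ) (f : (Fin d → Bool) → ℝ) : ℝ :=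
  cubeMean d fun u => cubeMean d fun v => f u * f v * noiseKernel d ρ u v

section Cube

variable {d : ℕ}

lemma cubeMean_mono {f g : (Fin d → Bool) → ℝ} (h : ∀ u, f u ≤ g u) :
    cubeMean d f ≤ cubeMean d g :=
  mul_le_mul_of_nonneg_left (sum_le_sum fun u _ => h u) (by positivity)

lemma cubeMean_nonneg {f : (Fin d → Bool) → ℝ} (h : ∀ u, 0 ≤ f u) : 0 ≤ cubeMean d f :=
  mul_nonneg (by positivity) (sum_nonneg fun u _ => h u)

lemma cubeMean_zero (f : (Fin 0 → Bool) → ℝ) (u : Fin 0 → Bool) : cubeMean 0 f = f u := by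
  rw [cubeMean, Fintype.sum_subsingleton _ u]
  simp

lemma cubeMean_succ (f : (Fin (d + 1) → Bool) → ℝ) :
    cubeMean (d + 1) f = cubeMean d fun w => (f (Fin.cons false w) + f (Fin.cons true w)) / 2 := by
  rw [cubeMean, cubeMean, ← Equiv.sum_comp (Fin.consEquiv fun _ => Bool) f,
    Fintype.sum_prod_type, Fintype.sum_bool, ← sum_add_distrib, ← sum_div, pow_succ]
  simp only [Fin.consEquiv, Equiv.coe_fn_mk, add_comm (f (Fin.cons true _))]
  ring

lemma noiseKernel_cons (ρ : ℝ) (a b : Bool) (w w' : Fin d → Bool) :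
    noiseKernel (d + 1) ρ (Fin.cons a w) (Fin.cons b w') =
      (if a = b then 1 + ρ else 1 - ρ) * noiseKernel d ρ w w' := by
  simp [noiseKernel, Fin.prod_univ_succ]

lemma noiseStability_const_mul (ρ c : ℝ) (f : (Fin d → Bool) → ℝ) :
    noiseStability d ρ (fun u => c * f u) = c ^ 2 * noiseStability d ρ f := by
  simp only [noiseStability, cubeMean, mul_sum]
  congr 1 with u
  congr 1 with v
  ring

lemma noiseStability_succ (ρ : ℝ) (f : (Fin (d + 1) → Bool) → ℝ) :
    noiseStability (d + 1) ρ f =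
      noiseStability d ρ (fun w => (f (Fin.cons false w) + f (Fin.cons true w)) / 2) +
        ρ * noiseStability d ρ (fun w => (f (Fin.cons false w) - f (Fin.cons true w)) / 2) := by
  simp only [noiseStability, cubeMean_succ, noiseKernel_cons]
  simp only [cubeMean, mul_sum, sum_div, ← sum_add_distrib]
  refine sum_congr rfl fun w _ => sum_congr rfl fun w' _ => ?_
  simp only [ite_true, Bool.false_eq_true, Bool.true_eq_false, ite_false]
  ring

lemma cubeMean_abs_rpow_add_le {p : ℝ} (hp₀ : 0 < p) (hp₂ : p ≤ 2) (g h : (Fin d → Bool) → ℝ) :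
    cubeMean d (fun u => |g u| ^ p) ^ (2 / p) + cubeMean d (fun u => |h u| ^ p) ^ (2 / p) ≤
      cubeMean d (fun u => (g u ^ 2 + h u ^ 2) ^ (p / 2)) ^ (2 / p) := by
  have hq : 2 / p = 1 / (p / 2) := by field_simp
  simp only [cubeMean, abs_rpow_eq_sq_rpow]
  rw [mul_rpow (by positivity) (sum_nonneg fun u _ => by positivity),
    mul_rpow (by positivity) (sum_nonneg fun u _ => by positivity),
    mul_rpow (by positivity) (sum_nonneg fun u _ => by positivity), ← mul_add, hq]
  exact mul_le_mul_of_nonneg_left (add_Lp_le_Lp_add_of_le_one univ (by positivity)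
    (by linarith) (fun u _ => sq_nonneg (g u)) (fun u _ => sq_nonneg (h u))) (by positivity)

theorem noiseStability_le_rpow_cubeMean_abs_rpow {ε : ℝ} (hε : |ε| ≤ 1) :
    ∀ {d : ℕ} (f : (Fin d → Bool) → ℝ),
      noiseStability d (ε ^ 2) f ≤ cubeMean d (fun u => |f u| ^ (1 + ε ^ 2)) ^ (2 / (1 + ε ^ 2))
  | 0, f => by
    have hp : (0 : ℝ) < 1 + ε ^ 2 := by positivity
    simp only [noiseStability, cubeMean_zero _ Fin.elim0, noiseKernel, univ_eq_empty,
      prod_empty, mul_one, abs_rpow_eq_sq_rpow, ← rpow_mul (sq_nonneg _)]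
    rw [div_mul_div_cancel₀' hp.ne', div_self two_ne_zero, rpow_one, sq]
  | d + 1, f => by
    set p := 1 + ε ^ 2
    have hp₁ : 1 ≤ p := le_add_of_nonneg_right (sq_nonneg ε)
    have hp₂ : p ≤ 2 := by simp only [p]; linarith [(sq_le_one_iff_abs_le_one ε).mpr hε]
    set g : (Fin d → Bool) → ℝ := fun w => (f (Fin.cons false w) + f (Fin.cons true w)) / 2
    set h : (Fin d → Bool) → ℝ := fun w => (f (Fin.cons false w) - f (Fin.cons true w)) / 2
    calc noiseStability (d + 1) (ε ^ 2) f
        = noiseStability d (ε ^ 2) g + noiseStability d (ε ^ 2) (fun w => ε * h w) := by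
          rw [noiseStability_succ, noiseStability_const_mul]
      _ ≤ cubeMean d (fun u => |g u| ^ p) ^ (2 / p) +
            cubeMean d (fun u => |ε * h u| ^ p) ^ (2 / p) :=
          add_le_add (noiseStability_le_rpow_cubeMean_abs_rpow hε g)
            (noiseStability_le_rpow_cubeMean_abs_rpow hε _)
      _ ≤ cubeMean d (fun u => (g u ^ 2 + (ε * h u) ^ 2) ^ (p / 2)) ^ (2 / p) :=
          cubeMean_abs_rpow_add_le (by positivity) hp₂ _ _
      _ ≤ cubeMean (d + 1) (fun u => |f u| ^ p) ^ (2 / p) := by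
          refine rpow_le_rpow (cubeMean_nonneg fun u => by positivity) ?_ (by positivity)
          rw [cubeMean_succ]
          refine cubeMean_mono fun w => ?_
          have hε2 : g w ^ 2 + (ε * h w) ^ 2 = g w ^ 2 + (p - 1) * h w ^ 2 := by
            simp only [p]; ring
          have hadd : g w + h w = f (Fin.cons false w) := by simp only [g, h]; ring
          have hsub : g w - h w = f (Fin.cons true w) := by simp only [g, h]; ring
          rw [hε2, ← hadd, ← hsub]
          exact two_point_inequality hp₁ hp₂ _ _

lemma walsh_eq_prod (S : Finset (Fin d)) (u : Fin d → Bool) :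
    walsh d S u = ∏ j ∈ S, if u j then -1 else 1 := by
  rw [prod_ite, prod_const, prod_const_one, mul_one, walsh]

lemma sum_pow_card_mul_walsh_mul_walsh (ρ : ℝ) (u v : Fin d → Bool) :
    ∑ S : Finset (Fin d), ρ ^ S.card * (walsh d S u * walsh d S v) = noiseKernel d ρ u v := by
  have hterm : ∀ S : Finset (Fin d), ρ ^ S.card * (walsh d S u * walsh d S v) =
      ∏ j ∈ S, ρ * (if u j = v j then 1 else -1) := by
    intro S
    rw [prod_mul_distrib, prod_const, walsh_eq_prod, walsh_eq_prod, ← prod_mul_distrib]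
    congr 1
    refine prod_congr rfl fun j _ => ?_
    cases u j <;> cases v j <;> norm_num
  rw [sum_congr rfl fun S _ => hterm S, ← powerset_univ, ← prod_one_add, noiseKernel]
  refine prod_congr rfl fun j _ => ?_
  split_ifs <;> ring

lemma sum_pow_card_mul_cubeFourier_sq (ρ : ℝ) (f : (Fin d → Bool) → ℝ) :
    ∑ S : Finset (Fin d), ρ ^ S.card * cubeFourier d f S ^ 2 = noiseStability d ρ f := by
  simp only [noiseStability, ← sum_pow_card_mul_walsh_mul_walsh, cubeMean, cubeFourier, sq,
    mul_sum, sum_mul]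
  rw [sum_comm]
  refine sum_congr rfl fun u _ => ?_
  rw [sum_comm]
  refine sum_congr rfl fun v _ => sum_congr rfl fun S _ => ?_
  ring

end Cube

theorem bonami_beckner_indicator_general (d : ℕ) (B : Finset (Fin d → Bool))
    (ε : ℝ) (hε : ε ∈ Set.Icc (0 : ℝ) 1) :
    ∑ S : Finset (Fin d),
        ε ^ (2 * S.card) * (cubeFourier d (fun u => if u ∈ B then 1 else 0) S) ^ 2
      ≤ ((B.card : ℝ) / 2 ^ d) ^ ((2 : ℝ) / (1 + ε ^ 2)) := by
  have hp : (0 : ℝ) < 1 + ε ^ 2 := by positivity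
  have hmoment : cubeMean d (fun u => |if u ∈ B then (1 : ℝ) else 0| ^ (1 + ε ^ 2)) =
      B.card / 2 ^ d := by
    simp [cubeMean, apply_ite, zero_rpow hp.ne', div_eq_inv_mul]
  simp only [pow_mul]
  rw [sum_pow_card_mul_cubeFourier_sq, ← hmoment]
  exact noiseStability_le_rpow_cubeMean_abs_rpow (abs_le.mpr ⟨by linarith [hε.1], hε.2⟩) _

/-- The Bonami–Beckner hypercontractive inequality applied to the indicator of `B`:
`∑_S ε^{2|S|} (1̂_B(S))² ≤ (|B|/2^d)^{2/(1+ε²)}` for `ε ∈ [0,1]`. -/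
theorem bonami_beckner_indicator (d : ℕ) (B : Finset (Fin d → Bool)) (hB : B.Nonempty)
    (ε : ℝ) (hε : ε ∈ Set.Icc (0 : ℝ) 1) :
    ∑ S : Finset (Fin d),
        ε ^ (2 * S.card) * (cubeFourier d (fun u => if u ∈ B then 1 else 0) S) ^ 2
      ≤ ((B.card : ℝ) / 2 ^ d) ^ ((2 : ℝ) / (1 + ε ^ 2)) :=
  bonami_beckner_indicator_general d B ε hε
end

section
/- Let r be an odd positive integer and B a nonempty subset of {0,1}^d. If Q_B denotes the point obtained by choosing a uniform random point z ∈ B and performing r steps of the standard random walk on the Hamming cube starting from z, then Pr[Q_B ∈ B] ≤ (|B|/2^d)^{(e^{2r/d}-1)/(e^{2r/d}+1)}. -/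
open Finset

/-- Transition matrix of the standard random walk on the Hamming cube. -/
noncomputable def walkMatrix (d : ℕ) : Matrix (Fin d → Bool) (Fin d → Bool) ℝ :=
  fun u v => if hammingDist u v = 1 then 1 / d else 0

namespace WalkAux

/-- Fourier character on the cube. -/
noncomputable def chi {d : ℕ} (s x : Fin d → Bool) : ℝ :=
  ∏ i, (if s i && x i then (-1 : ℝ) else 1)

/-- Hamming weight. -/
def wt {d : ℕ} (s : Fin d → Bool) : ℕ := (univ.filter fun i => s i = true).card

lemma chi_cons {d : ℕ} (s₀ x₀ : Bool) (s x : Fin d → Bool) :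
    chi (Fin.cons s₀ s) (Fin.cons x₀ x) = (if s₀ && x₀ then (-1:ℝ) else 1) * chi s x := by
  unfold chi
  rw [Fin.prod_univ_succ]
  simp

/-- Orthogonality of characters. -/
lemma chi_orth {d : ℕ} (x y : Fin d → Bool) :
    ∑ s : Fin d → Bool, chi s x * chi s y = if x = y then (2:ℝ) ^ d else 0 := by
  have key : ∑ s : Fin d → Bool, chi s x * chi s y
      = ∏ i, ((if x i = y i then (2:ℝ) else 0)) := by
    have : ∀ s : Fin d → Bool, chi s x * chi s y
        = ∏ i, ((if s i && x i then (-1:ℝ) else 1) * (if s i && y i then (-1:ℝ) else 1)) := by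
      intro s; rw [chi, chi, ← Finset.prod_mul_distrib]
    simp_rw [this]
    rw [← Fintype.prod_sum (fun i b => (if b && x i then (-1:ℝ) else 1) * (if b && y i then (-1:ℝ) else 1))]
    apply Finset.prod_congr rfl
    intro i _
    rw [Fintype.sum_bool]
    cases hx : x i <;> cases hy : y i <;> norm_num
  rw [key]
  by_cases h : x = y
  · simp [h]
  · obtain ⟨i, hi⟩ := Function.ne_iff.mp h
    rw [Finset.prod_eq_zero (Finset.mem_univ i)]
    · simp [h]
    · simp [hi]

lemma chi_update {d : ℕ} (s x : Fin d → Bool) (i : Fin d) :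
    chi s (Function.update x i (!x i)) = (if s i then (-1:ℝ) else 1) * chi s x := by
  unfold chi
  rw [← Finset.mul_prod_erase univ _ (Finset.mem_univ i),
      ← Finset.mul_prod_erase univ (fun j => if s j && x j then (-1:ℝ) else 1) (Finset.mem_univ i),
      ← mul_assoc]
  congr 1
  · rw [Function.update_self]
    cases hs : s i <;> cases hx : x i <;> norm_num
  · apply Finset.prod_congr rfl
    intro j hj
    rw [Function.update_of_ne (Finset.ne_of_mem_erase hj)]

lemma neighbors_eq {d : ℕ} (x : Fin d → Bool) :
    univ.filter (fun y => hammingDist x y = 1)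
      = univ.image (fun i => Function.update x i (!x i)) := by
  ext y
  simp only [Finset.mem_filter, Finset.mem_univ, true_and, Finset.mem_image]
  constructor
  · intro hy
    have h1 : (univ.filter fun j => x j ≠ y j).card = 1 := hy
    obtain ⟨i, hi⟩ := Finset.card_eq_one.mp h1
    refine ⟨i, ?_⟩
    have hmem : ∀ j, (x j ≠ y j) ↔ j = i := by
      intro j
      constructor
      · intro hj
        have : j ∈ univ.filter fun j => x j ≠ y j := by simp [hj]
        rw [hi] at this; simpa using this
      · rintro rfl
        have : j ∈ ({j} : Finset (Fin d)) := by simp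
        rw [← hi] at this; simpa using this
    funext j
    by_cases hji : j = i
    · subst hji
      have : x j ≠ y j := (hmem j).mpr rfl
      rw [Function.update_self]
      cases hx : x j <;> cases hy' : y j <;> simp_all
    · rw [Function.update_of_ne hji]
      by_contra hne
      exact hji ((hmem j).mp hne)
  · rintro ⟨i, rfl⟩
    show (univ.filter fun j => x j ≠ Function.update x i (!x i) j).card = 1
    have : (univ.filter fun j => x j ≠ Function.update x i (!x i) j) = {i} := by
      ext j
      simp only [Finset.mem_filter, Finset.mem_univ, true_and, Finset.mem_singleton]
      by_cases hji : j = i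
      · subst hji; rw [Function.update_self]; simp
      · rw [Function.update_of_ne hji]; simp [hji]
    rw [this, Finset.card_singleton]

lemma update_injective {d : ℕ} (x : Fin d → Bool) :
    Function.Injective (fun i => Function.update x i (!x i)) := by
  intro i j hij
  by_contra hne
  have h1 : Function.update x i (!x i) i = Function.update x j (!x j) i := congrFun hij i
  rw [Function.update_self, Function.update_of_ne hne] at h1
  cases x i <;> simp_all

lemma sum_sign {d : ℕ} (s : Fin d → Bool) :
    ∑ i, (if s i then (-1:ℝ) else 1) = (d : ℝ) - 2 * wt s := by
  have hle : wt s ≤ d := by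
    calc wt s ≤ (univ : Finset (Fin d)).card := Finset.card_filter_le _ _
    _ = d := by simp
  have h2 : (univ.filter fun i => ¬ (s i = true)).card = d - wt s := by
    have h1 := Finset.card_filter_add_card_filter_not
      (s := (univ : Finset (Fin d))) (p := fun i => s i = true)
    simp only [Finset.card_univ, Fintype.card_fin] at h1
    unfold wt at *; omega
  rw [Finset.sum_ite, Finset.sum_const, Finset.sum_const, h2, nsmul_eq_mul, nsmul_eq_mul,
    Nat.cast_sub hle]
  unfold wt
  ring

/-- `chi s` is an eigenvector of the walk matrix. -/
lemma eigen {d : ℕ} (hd : 0 < d) (s : Fin d → Bool) (x : Fin d → Bool) :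
    ∑ y, walkMatrix d x y * chi s y = (((d:ℝ) - 2 * wt s) / d) * chi s x := by
  have step : ∑ y, walkMatrix d x y * chi s y
      = (1/(d:ℝ)) * ∑ y ∈ univ.filter (fun y => hammingDist x y = 1), chi s y := by
    rw [Finset.mul_sum, Finset.sum_filter]
    apply Finset.sum_congr rfl
    intro y _
    unfold walkMatrix
    split <;> simp
  rw [step, neighbors_eq x, Finset.sum_image (fun i _ j _ h => update_injective x h)]
  have : ∀ i, chi s (Function.update x i (!x i)) = (if s i then (-1:ℝ) else 1) * chi s x :=
    chi_update s x
  rw [Finset.sum_congr rfl (fun i _ => this i), ← Finset.sum_mul, sum_sign]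
  field_simp




lemma eigen_pow {d : ℕ} (hd : 0 < d) (r : ℕ) (s : Fin d → Bool) (x : Fin d → Bool) :
    ∑ y, (walkMatrix d ^ r) x y * chi s y = (((d:ℝ) - 2 * wt s) / d) ^ r * chi s x := by
  induction r generalizing x with
  | zero => simp [Matrix.one_apply]
  | succ n ih =>
      have expand : ∀ y, (walkMatrix d ^ (n+1)) x y
          = ∑ z, (walkMatrix d ^ n) x z * walkMatrix d z y := by
        intro y; rw [pow_succ, Matrix.mul_apply]
      simp_rw [expand, Finset.sum_mul]
      rw [Finset.sum_comm]
      simp_rw [mul_assoc, ← Finset.mul_sum, eigen hd s, ← mul_assoc, mul_comm _ ((((d:ℝ)-2*wt s)/d)),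
        mul_assoc, ← Finset.mul_sum, ih, pow_succ]
      ring

lemma decomp {d : ℕ} (hd : 0 < d) (r : ℕ) (B : Finset (Fin d → Bool)) :
    ∑ a ∈ B, ∑ b ∈ B, (walkMatrix d ^ r) a b
      = ((2:ℝ)^d)⁻¹ * ∑ s, (((d:ℝ) - 2 * wt s) / d) ^ r * (∑ a ∈ B, chi s a) ^ 2 := by
  have h2 : ((2:ℝ)^d) ≠ 0 := by positivity
  have hins : ∀ b : Fin d → Bool,
      (if b ∈ B then (2:ℝ)^d else 0) = ∑ s, chi s b * ∑ a ∈ B, chi s a := by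
    intro b
    simp_rw [Finset.mul_sum]
    rw [Finset.sum_comm]
    simp_rw [chi_orth]
    rw [Finset.sum_ite_eq B b (fun _ => (2:ℝ)^d)]
  have key : ∀ a, ∑ b ∈ B, (walkMatrix d ^ r) a b
      = ((2:ℝ)^d)⁻¹ * ∑ s, (((d:ℝ) - 2 * wt s) / d) ^ r * chi s a * (∑ a ∈ B, chi s a) := by
    intro a
    have e1 : ∀ b, ((2:ℝ)^d)⁻¹ * ((walkMatrix d ^ r) a b * (if b ∈ B then (2:ℝ)^d else 0))
        = if b ∈ B then (walkMatrix d ^ r) a b else 0 := by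
      intro b; split
      · field_simp
      · simp
    have step1 : ((2:ℝ)^d)⁻¹ * ∑ b, (walkMatrix d ^ r) a b * (if b ∈ B then (2:ℝ)^d else 0)
        = ∑ b ∈ B, (walkMatrix d ^ r) a b := by
      rw [Finset.mul_sum]
      simp_rw [e1]
      rw [Finset.sum_ite_mem, Finset.univ_inter]
    rw [← step1]
    congr 1
    simp_rw [hins, Finset.mul_sum]
    rw [Finset.sum_comm]
    apply Finset.sum_congr rfl
    intro s _
    rw [Finset.sum_comm]
    apply Finset.sum_congr rfl
    intro b _
    have : ∑ x, (walkMatrix d ^ r) a x * (chi s x * chi s b)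
        = (∑ x, (walkMatrix d ^ r) a x * chi s x) * chi s b := by
      rw [Finset.sum_mul]
      simp_rw [mul_assoc]
    rw [this, eigen_pow hd r s a]
  rw [Finset.sum_congr rfl (fun a _ => key a), ← Finset.mul_sum]
  congr 1
  rw [Finset.sum_comm]
  apply Finset.sum_congr rfl
  intro s _
  rw [← Finset.sum_mul, ← Finset.mul_sum, sq]
  ring

lemma G_nonneg {p : ℝ} (hp1 : 1 ≤ p) (hp2 : p ≤ 2) {t : ℝ} (ht0 : 0 ≤ t) (ht1 : t ≤ 1) :
    2 + p * (p-1) * t^2 ≤ (1+t) ^ p + (1-t) ^ p := by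
  have hcont1 : Continuous (fun x : ℝ => (1+x) ^ p) :=
    (Real.continuous_rpow_const (by linarith)).comp (continuous_const.add continuous_id)
  have hcont1' : Continuous (fun x : ℝ => (1-x) ^ p) :=
    (Real.continuous_rpow_const (by linarith)).comp (continuous_const.sub continuous_id)
  have hcont2 : Continuous (fun x : ℝ => (1+x) ^ (p-1)) :=
    (Real.continuous_rpow_const (by linarith)).comp (continuous_const.add continuous_id)
  have hcont2' : Continuous (fun x : ℝ => (1-x) ^ (p-1)) :=
    (Real.continuous_rpow_const (by linarith)).comp (continuous_const.sub continuous_id)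
  -- derivative facts
  have hd1 : ∀ x : ℝ, 0 < 1+x → 0 < 1-x →
      HasDerivAt (fun t : ℝ => (1+t)^p + (1-t)^p - 2 - p*(p-1)*t^2)
        (p*(1+x)^(p-1) - p*(1-x)^(p-1) - 2*p*(p-1)*x) x := by
    intro x hx1 hx2
    have h1 : HasDerivAt (fun t : ℝ => (1+t)^p) (1 * p * (1+x)^(p-1)) x :=
      HasDerivAt.rpow_const ((hasDerivAt_id x).const_add 1) (Or.inl (ne_of_gt hx1))
    have h2 : HasDerivAt (fun t : ℝ => (1-t)^p) ((-1) * p * (1-x)^(p-1)) x :=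
      HasDerivAt.rpow_const ((hasDerivAt_id x).const_sub 1) (Or.inl (ne_of_gt hx2))
    have h3 : HasDerivAt (fun t : ℝ => p*(p-1)*t^2) (p*(p-1)*(2*x)) x := by
      have := (hasDerivAt_pow 2 x).const_mul (p*(p-1))
      simpa using this
    have := ((h1.add h2).sub_const 2).sub h3
    refine this.congr_deriv ?_
    ring
  have hd2 : ∀ x : ℝ, 0 < 1+x → 0 < 1-x →
      HasDerivAt (fun t : ℝ => p*(1+t)^(p-1) - p*(1-t)^(p-1) - 2*p*(p-1)*t)
        (p*((p-1)*(1+x)^(p-2)) + p*((p-1)*(1-x)^(p-2)) - 2*p*(p-1)) x := by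
    intro x hx1 hx2
    have h1 : HasDerivAt (fun t : ℝ => (1+t)^(p-1)) (1 * (p-1) * (1+x)^(p-1-1)) x :=
      HasDerivAt.rpow_const ((hasDerivAt_id x).const_add 1) (Or.inl (ne_of_gt hx1))
    have h2 : HasDerivAt (fun t : ℝ => (1-t)^(p-1)) ((-1) * (p-1) * (1-x)^(p-1-1)) x :=
      HasDerivAt.rpow_const ((hasDerivAt_id x).const_sub 1) (Or.inl (ne_of_gt hx2))
    have h3 : HasDerivAt (fun t : ℝ => 2*p*(p-1)*t) (2*p*(p-1)) x := by
      simpa using (hasDerivAt_id x).const_mul (2*p*(p-1))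
    have := ((h1.const_mul p).sub (h2.const_mul p)).sub h3
    refine this.congr_deriv ?_
    have : p - 1 - 1 = p - 2 := by ring
    rw [this]
    ring
  -- G1 is nonneg on [0,1]
  have hG1mono : MonotoneOn (fun t : ℝ => p*(1+t)^(p-1) - p*(1-t)^(p-1) - 2*p*(p-1)*t)
      (Set.Icc 0 1) := by
    apply monotoneOn_of_deriv_nonneg (convex_Icc 0 1)
    · exact (((continuous_const.mul hcont2).sub (continuous_const.mul hcont2')).sub
        (continuous_const.mul continuous_id)).continuousOn
    · intro x hx
      rw [interior_Icc] at hx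
      exact (hd2 x (by linarith [hx.1]) (by linarith [hx.2])).differentiableAt.differentiableWithinAt
    · intro x hx
      rw [interior_Icc] at hx
      rw [(hd2 x (by linarith [hx.1]) (by linarith [hx.2])).deriv]
      have hx1 : (0:ℝ) < 1+x := by linarith [hx.1]
      have hx2 : (0:ℝ) < 1-x := by linarith [hx.2]
      have ha : (0:ℝ) < (1+x)^(p-2) := Real.rpow_pos_of_pos hx1 _
      have hb : (0:ℝ) < (1-x)^(p-2) := Real.rpow_pos_of_pos hx2 _
      have hab : (1:ℝ) ≤ (1+x)^(p-2) * (1-x)^(p-2) := by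
        rw [← Real.mul_rpow (le_of_lt hx1) (le_of_lt hx2)]
        apply Real.one_le_rpow_of_pos_of_le_one_of_nonpos
        · exact mul_pos hx1 hx2
        · nlinarith [sq_nonneg x]
        · linarith
      have hsum : (2:ℝ) ≤ (1+x)^(p-2) + (1-x)^(p-2) := by
        nlinarith [sq_nonneg ((1+x)^(p-2) - (1-x)^(p-2))]
      have hpp : (0:ℝ) ≤ p * (p-1) := by nlinarith
      nlinarith [mul_nonneg hpp (by linarith : (0:ℝ) ≤ (1+x)^(p-2) + (1-x)^(p-2) - 2)]
  have hG1nonneg : ∀ t ∈ Set.Icc (0:ℝ) 1,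
      0 ≤ p*(1+t)^(p-1) - p*(1-t)^(p-1) - 2*p*(p-1)*t := by
    intro t ht
    have h0 : p*(1+(0:ℝ))^(p-1) - p*(1-(0:ℝ))^(p-1) - 2*p*(p-1)*0 = 0 := by
      norm_num [Real.one_rpow]
    have := hG1mono (Set.mem_Icc.mpr ⟨le_refl 0, zero_le_one⟩) ht ht.1
    simpa [h0] using this
  -- G is monotone on [0,1]
  have hGmono : MonotoneOn (fun t : ℝ => (1+t)^p + (1-t)^p - 2 - p*(p-1)*t^2)
      (Set.Icc 0 1) := by
    apply monotoneOn_of_deriv_nonneg (convex_Icc 0 1)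
    · exact (((hcont1.add hcont1').sub continuous_const).sub
        ((continuous_const.mul (continuous_pow 2)))).continuousOn
    · intro x hx
      rw [interior_Icc] at hx
      exact (hd1 x (by linarith [hx.1]) (by linarith [hx.2])).differentiableAt.differentiableWithinAt
    · intro x hx
      rw [interior_Icc] at hx
      rw [(hd1 x (by linarith [hx.1]) (by linarith [hx.2])).deriv]
      exact hG1nonneg x ⟨le_of_lt hx.1, le_of_lt hx.2⟩
  have h0 : (1+(0:ℝ))^p + (1-(0:ℝ))^p - 2 - p*(p-1)*(0:ℝ)^2 = 0 := by
    norm_num [Real.one_rpow]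
  have := hGmono (Set.mem_Icc.mpr ⟨le_refl 0, zero_le_one⟩) (Set.mem_Icc.mpr ⟨ht0, ht1⟩) ht0
  simp only [] at this
  rw [h0] at this
  linarith

/-- Core two-point inequality in normalized form. -/
lemma core {p : ℝ} (hp1 : 1 ≤ p) (hp2 : p ≤ 2) {t : ℝ} (ht0 : 0 ≤ t) (ht1 : t ≤ 1) :
    1 + (p-1) * t^2 ≤ (((1+t)^p + (1-t)^p)/2) ^ (2/p) := by
  have hp0 : 0 < p := by linarith
  have havg : 0 ≤ ((1+t)^p + (1-t)^p)/2 := by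
    have := Real.rpow_nonneg (by linarith : (0:ℝ) ≤ 1+t) p
    have := Real.rpow_nonneg (by linarith : (0:ℝ) ≤ 1-t) p
    linarith
  have hbase : 0 ≤ 1 + (p-1)*t^2 := by nlinarith
  have step1 : (1 + (p-1)*t^2) ^ (p/2) ≤ ((1+t)^p + (1-t)^p)/2 := by
    have hber : (1 + (p-1)*t^2) ^ (p/2) ≤ 1 + (p/2) * ((p-1)*t^2) := by
      apply rpow_one_add_le_one_add_mul_self
      · nlinarith
      · linarith
      · linarith
    have hG := G_nonneg hp1 hp2 ht0 ht1
    calc (1 + (p-1)*t^2) ^ (p/2) ≤ 1 + (p/2) * ((p-1)*t^2) := hber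
    _ ≤ ((1+t)^p + (1-t)^p)/2 := by nlinarith
  calc 1 + (p-1)*t^2 = ((1 + (p-1)*t^2) ^ (p/2)) ^ (2/p) := by
        rw [← Real.rpow_mul hbase, show p/2*(2/p) = 1 by field_simp, Real.rpow_one]
  _ ≤ (((1+t)^p + (1-t)^p)/2) ^ (2/p) := by
        apply Real.rpow_le_rpow (Real.rpow_nonneg hbase _) step1
        positivity


lemma twopoint_aux {ρ : ℝ} (h0 : 0 ≤ ρ) (h1 : ρ ≤ 1) {u v : ℝ} (hv : 0 ≤ v) (hvu : v ≤ u) :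
    (1+ρ)*(u^2+v^2) + 2*(1-ρ)*(u*v) ≤ 2^(2 - 2/(1+ρ)) * (u^(1+ρ) + v^(1+ρ))^(2/(1+ρ)) := by
  have hu : 0 ≤ u := le_trans hv hvu
  have hp0 : (0:ℝ) < 1+ρ := by linarith
  rcases eq_or_lt_of_le hu with hu0 | hu0
  · have hv0 : v = 0 := le_antisymm (hu0 ▸ hvu) hv
    rw [← hu0, hv0, Real.zero_rpow (ne_of_gt hp0)]
    rw [show (0:ℝ) + 0 = 0 by ring, Real.zero_rpow (by positivity : 2/(1+ρ) ≠ 0)]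
    simp
  · have hc : (0:ℝ) < u + v := by linarith
    have hc2 : (0:ℝ) < (u+v)/2 := by linarith
    set t := (u - v)/(u + v) with hts
    set c := (u+v)/2 with hcdef
    have ht0 : 0 ≤ t := div_nonneg (by linarith) hc.le
    have ht1 : t ≤ 1 := by rw [hts, div_le_one hc]; linarith
    have h1t : (0:ℝ) ≤ 1 + t := by linarith
    have h1t' : (0:ℝ) ≤ 1 - t := by linarith
    have hcore := core (p := 1+ρ) (by linarith) (by linarith) ht0 ht1
    have hadd : (1+ρ) - 1 = ρ := by ring
    rw [hadd] at hcore
    have eu : u = c * (1+t) := by rw [hcdef, hts]; field_simp; ring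
    have ev : v = c * (1-t) := by rw [hcdef, hts]; field_simp; ring
    have hA : (0:ℝ) ≤ (1+t)^(1+ρ) + (1-t)^(1+ρ) :=
      add_nonneg (Real.rpow_nonneg h1t _) (Real.rpow_nonneg h1t' _)
    have hsum : u^(1+ρ) + v^(1+ρ)
        = c^(1+ρ) * ((1+t)^(1+ρ) + (1-t)^(1+ρ)) := by
      rw [eu, ev, Real.mul_rpow hc2.le h1t, Real.mul_rpow hc2.le h1t']
      ring
    have hcp : (c^(1+ρ))^(2/(1+ρ)) = c^2 := by
      rw [← Real.rpow_natCast c 2, ← Real.rpow_mul hc2.le]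
      congr 1
      push_cast
      field_simp
    have h2s : (2:ℝ)^(2 - 2/(1+ρ)) * 2^(2/(1+ρ)) = 4 := by
      rw [← Real.rpow_add (by norm_num : (0:ℝ) < 2)]
      rw [show 2 - 2/(1+ρ) + 2/(1+ρ) = ((2:ℕ):ℝ) by push_cast; ring, Real.rpow_natCast]
      norm_num
    have RHS_eq : (2:ℝ)^(2 - 2/(1+ρ)) * (u^(1+ρ) + v^(1+ρ))^(2/(1+ρ))
        = 4 * ((u+v)/2)^2 * ((((1+t)^(1+ρ) + (1-t)^(1+ρ)))/2)^(2/(1+ρ)) := by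
      rw [hsum,
        show c^(1+ρ) * ((1+t)^(1+ρ) + (1-t)^(1+ρ))
          = c^(1+ρ) * (2 * (((1+t)^(1+ρ) + (1-t)^(1+ρ))/2)) by ring,
        Real.mul_rpow (Real.rpow_nonneg hc2.le _) (by linarith),
        Real.mul_rpow (by norm_num) (by linarith), hcp]
      rw [show (2:ℝ)^(2 - 2/(1+ρ)) * (c^2 * ((2:ℝ)^(2/(1+ρ))
            * ((((1+t)^(1+ρ) + (1-t)^(1+ρ)))/2)^(2/(1+ρ))))
          = ((2:ℝ)^(2 - 2/(1+ρ)) * 2^(2/(1+ρ))) * c^2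
            * ((((1+t)^(1+ρ) + (1-t)^(1+ρ)))/2)^(2/(1+ρ)) by ring, h2s]
    have LHS_eq : (1+ρ)*(u^2+v^2) + 2*(1-ρ)*(u*v) = 4*c^2*(1 + ρ*t^2) := by
      rw [eu, ev]
      ring
    rw [LHS_eq, RHS_eq]
    rw [mul_assoc, mul_assoc]
    apply mul_le_mul_of_nonneg_left _ (by norm_num : (0:ℝ) ≤ 4)
    apply mul_le_mul_of_nonneg_left _ (sq_nonneg _)
    exact hcore

lemma twopoint_uv {ρ : ℝ} (h0 : 0 ≤ ρ) (h1 : ρ ≤ 1) {u v : ℝ} (hu : 0 ≤ u) (hv : 0 ≤ v) :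
    (1+ρ)*(u^2+v^2) + 2*(1-ρ)*(u*v) ≤ 2^(2 - 2/(1+ρ)) * (u^(1+ρ) + v^(1+ρ))^(2/(1+ρ)) := by
  rcases le_total v u with h | h
  · exact twopoint_aux h0 h1 hv h
  · calc (1+ρ)*(u^2+v^2) + 2*(1-ρ)*(u*v) = (1+ρ)*(v^2+u^2) + 2*(1-ρ)*(v*u) := by ring
    _ ≤ 2^(2 - 2/(1+ρ)) * (v^(1+ρ) + u^(1+ρ))^(2/(1+ρ)) := twopoint_aux h0 h1 hu h
    _ = 2^(2 - 2/(1+ρ)) * (u^(1+ρ) + v^(1+ρ))^(2/(1+ρ)) := by rw [add_comm (v^(1+ρ))]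

lemma twopoint {ρ : ℝ} (h0 : 0 ≤ ρ) (h1 : ρ ≤ 1) {m0 m1 : ℝ} (hm0 : 0 ≤ m0) (hm1 : 0 ≤ m1) :
    (1+ρ) * (m0 ^ (2/(1+ρ)) + m1 ^ (2/(1+ρ))) + 2*(1-ρ) * (m0^(1/(1+ρ)) * m1^(1/(1+ρ)))
      ≤ 2^(2 - 2/(1+ρ)) * (m0+m1)^(2/(1+ρ)) := by
  have hp0 : (0:ℝ) < 1+ρ := by linarith
  have key := twopoint_uv h0 h1 (Real.rpow_nonneg hm0 (1/(1+ρ))) (Real.rpow_nonneg hm1 (1/(1+ρ)))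
  have e2 : ∀ m : ℝ, 0 ≤ m → (m^(1/(1+ρ)))^(2:ℕ) = m ^ (2/(1+ρ)) := by
    intro m hm
    rw [← Real.rpow_natCast (m^(1/(1+ρ))) 2, ← Real.rpow_mul hm]
    congr 1
    push_cast
    ring
  have ep : ∀ m : ℝ, 0 ≤ m → (m^(1/(1+ρ)))^(1+ρ) = m := by
    intro m hm
    rw [← Real.rpow_mul hm, show 1/(1+ρ)*(1+ρ) = 1 by field_simp, Real.rpow_one]
  rw [e2 m0 hm0, e2 m1 hm1, ep m0 hm0, ep m1 hm1] at key
  exact key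


lemma step_sum {ι : Type*} [Fintype ι] {ρ : ℝ} (h0 : 0 ≤ ρ) (h1 : ρ ≤ 1)
    {W c0 c1 : ι → ℝ} (hW : ∀ s, 0 ≤ W s) {m0 m1 : ℝ}
    (hm0 : 0 ≤ m0) (hm1 : 0 ≤ m1) {E : ℝ}
    (hX : ∑ s, W s * c0 s^2 ≤ 2^E * m0^(2/(1+ρ)))
    (hY : ∑ s, W s * c1 s^2 ≤ 2^E * m1^(2/(1+ρ))) :
    ∑ s, (W s * (c0 s + c1 s)^2 + ρ * (W s * (c0 s - c1 s)^2))
      ≤ 2^(E + (2-2/(1+ρ))) * (m0+m1)^(2/(1+ρ)) := by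
  have hXnn : 0 ≤ ∑ s, W s * c0 s^2 :=
    Finset.sum_nonneg (fun s _ => mul_nonneg (hW s) (sq_nonneg _))
  have hYnn : 0 ≤ ∑ s, W s * c1 s^2 :=
    Finset.sum_nonneg (fun s _ => mul_nonneg (hW s) (sq_nonneg _))
  have hZ : ∑ s, W s * (c0 s * c1 s)
      ≤ √(∑ s, W s * c0 s^2) * √(∑ s, W s * c1 s^2) := by
    have key := Real.sum_mul_le_sqrt_mul_sqrt univ
      (fun s => √(W s) * c0 s) (fun s => √(W s) * c1 s)
    have e1 : ∀ s : ι, (√(W s) * c0 s) * (√(W s) * c1 s) = W s * (c0 s * c1 s) := by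
      intro s
      rw [show (√(W s) * c0 s) * (√(W s) * c1 s) = (√(W s)*√(W s)) * (c0 s * c1 s) by ring,
        Real.mul_self_sqrt (hW s)]
    have e2 : ∀ s : ι, (√(W s) * c0 s)^2 = W s * c0 s^2 := by
      intro s; rw [mul_pow, Real.sq_sqrt (hW s)]
    have e3 : ∀ s : ι, (√(W s) * c1 s)^2 = W s * c1 s^2 := by
      intro s; rw [mul_pow, Real.sq_sqrt (hW s)]
    simp_rw [e1, e2, e3] at key
    exact key
  have h2Epos : (0:ℝ) < 2^E := Real.rpow_pos_of_pos two_pos E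
  have hsq : √(∑ s, W s * c0 s^2) * √(∑ s, W s * c1 s^2)
      ≤ 2^E * (m0^(1/(1+ρ)) * m1^(1/(1+ρ))) := by
    have q0 : √(m0^(2/(1+ρ))) = m0^(1/(1+ρ)) := by
      rw [Real.sqrt_eq_rpow, ← Real.rpow_mul hm0]
      congr 1
      ring
    have q1 : √(m1^(2/(1+ρ))) = m1^(1/(1+ρ)) := by
      rw [Real.sqrt_eq_rpow, ← Real.rpow_mul hm1]
      congr 1
      ring
    have q2 : √((2:ℝ)^E) * √((2:ℝ)^E) = 2^E := Real.mul_self_sqrt h2Epos.le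
    calc √(∑ s, W s * c0 s^2) * √(∑ s, W s * c1 s^2)
        ≤ √(2^E * m0^(2/(1+ρ))) * √(2^E * m1^(2/(1+ρ))) :=
          mul_le_mul (Real.sqrt_le_sqrt hX) (Real.sqrt_le_sqrt hY)
            (Real.sqrt_nonneg _) (Real.sqrt_nonneg _)
      _ = 2^E * (m0^(1/(1+ρ)) * m1^(1/(1+ρ))) := by
          rw [Real.sqrt_mul h2Epos.le, Real.sqrt_mul h2Epos.le, q0, q1,
            show √((2:ℝ)^E) * m0^(1/(1+ρ)) * (√((2:ℝ)^E) * m1^(1/(1+ρ)))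
              = (√((2:ℝ)^E) * √((2:ℝ)^E)) * (m0^(1/(1+ρ)) * m1^(1/(1+ρ))) by ring, q2]
  have pereq : ∀ s : ι, W s * (c0 s + c1 s)^2 + ρ * (W s * (c0 s - c1 s)^2)
      = (1+ρ)*(W s * c0 s^2) + (1+ρ)*(W s * c1 s^2) + 2*(1-ρ)*(W s * (c0 s * c1 s)) := by
    intro s; ring
  have expand : ∑ s, (W s * (c0 s + c1 s)^2 + ρ * (W s * (c0 s - c1 s)^2))
      = (1+ρ) * ((∑ s, W s * c0 s^2) + (∑ s, W s * c1 s^2))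
        + 2*(1-ρ) * ∑ s, W s * (c0 s * c1 s) := by
    simp_rw [pereq]
    rw [Finset.sum_add_distrib, Finset.sum_add_distrib, ← Finset.mul_sum, ← Finset.mul_sum,
      ← Finset.mul_sum]
    ring
  rw [expand]
  have htp := twopoint h0 h1 hm0 hm1
  have B1 : (1+ρ) * ((∑ s, W s * c0 s^2) + (∑ s, W s * c1 s^2))
      ≤ (1+ρ) * (2^E * m0^(2/(1+ρ)) + 2^E * m1^(2/(1+ρ))) :=
    mul_le_mul_of_nonneg_left (add_le_add hX hY) (by linarith)
  have B2 : 2*(1-ρ) * ∑ s, W s * (c0 s * c1 s)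
      ≤ 2*(1-ρ) * (2^E * (m0^(1/(1+ρ)) * m1^(1/(1+ρ)))) :=
    mul_le_mul_of_nonneg_left (le_trans hZ hsq) (by linarith)
  have B3 : (1+ρ) * (2^E * m0^(2/(1+ρ)) + 2^E * m1^(2/(1+ρ)))
        + 2*(1-ρ) * (2^E * (m0^(1/(1+ρ)) * m1^(1/(1+ρ))))
      = 2^E * ((1+ρ) * (m0^(2/(1+ρ)) + m1^(2/(1+ρ)))
        + 2*(1-ρ) * (m0^(1/(1+ρ)) * m1^(1/(1+ρ)))) := by ring
  have B4 : (2:ℝ)^E * ((1+ρ) * (m0^(2/(1+ρ)) + m1^(2/(1+ρ)))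
        + 2*(1-ρ) * (m0^(1/(1+ρ)) * m1^(1/(1+ρ))))
      ≤ 2^E * (2^(2-2/(1+ρ)) * (m0+m1)^(2/(1+ρ))) :=
    mul_le_mul_of_nonneg_left htp h2Epos.le
  have B5 : (2:ℝ)^E * (2^(2-2/(1+ρ)) * (m0+m1)^(2/(1+ρ)))
      = 2^(E+(2-2/(1+ρ))) * (m0+m1)^(2/(1+ρ)) := by
    rw [Real.rpow_add two_pos]
    ring
  linarith

theorem hyper {ρ : ℝ} (h0 : 0 ≤ ρ) (h1 : ρ ≤ 1) :
    ∀ (d : ℕ) (f : (Fin d → Bool) → ℝ), (∀ a, 0 ≤ f a) →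
    ∑ s : Fin d → Bool, (∏ i, if s i then ρ else 1) * (∑ a, f a * chi s a) ^ 2 ≤
      (2:ℝ) ^ ((2 - 2/(1+ρ)) * (d:ℝ)) * (∑ a, f a ^ (1+ρ)) ^ (2/(1+ρ)) := by
  have hp0 : (0:ℝ) < 1+ρ := by linarith
  intro d
  induction d with
  | zero =>
      intro f hf
      simp only [Fintype.sum_unique, Finset.univ_eq_empty, Finset.prod_empty, Nat.cast_zero,
        mul_zero, Real.rpow_zero, one_mul]
      have hchi : ∀ s a : Fin 0 → Bool, chi s a = 1 := by
        intro s a; unfold chi; simp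
      rw [hchi, mul_one]
      have key : ∀ x : ℝ, 0 ≤ x → x ^ 2 = (x ^ (1+ρ)) ^ (2/(1+ρ)) := by
        intro x hx
        rw [← Real.rpow_mul hx,
          show (1+ρ) * (2/(1+ρ)) = ((2:ℕ):ℝ) by push_cast; field_simp, Real.rpow_natCast]
      exact le_of_eq (key _ (hf _))
  | succ d ih =>
      intro f hf
      have reindex : ∀ (g : (Fin (d+1) → Bool) → ℝ),
          ∑ x, g x = ∑ y : Fin d → Bool, (g (Fin.cons false y) + g (Fin.cons true y)) := by
        intro g
        rw [← Equiv.sum_comp (Fin.consEquiv (fun _ => Bool)) g, Fintype.sum_prod_type,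
          Finset.sum_comm]
        apply Finset.sum_congr rfl
        intro y _
        rw [Fintype.sum_bool, add_comm]
        rfl
      have hm0 : 0 ≤ ∑ a : Fin d → Bool, f (Fin.cons false a) ^ (1+ρ) :=
        Finset.sum_nonneg (fun a _ => Real.rpow_nonneg (hf _) _)
      have hm1 : 0 ≤ ∑ a : Fin d → Bool, f (Fin.cons true a) ^ (1+ρ) :=
        Finset.sum_nonneg (fun a _ => Real.rpow_nonneg (hf _) _)
      have hWnn : ∀ s' : Fin d → Bool, 0 ≤ ∏ i, (if s' i then ρ else 1 : ℝ) := by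
        intro s'
        apply Finset.prod_nonneg
        intro i _
        split
        exacts [h0, zero_le_one]
      have TF : ∀ s' : Fin d → Bool,
          (∏ i : Fin (d+1), if (Fin.cons false s' : Fin (d+1) → Bool) i then ρ else 1)
              * (∑ a, f a * chi (Fin.cons false s') a)^2
            + (∏ i : Fin (d+1), if (Fin.cons true s' : Fin (d+1) → Bool) i then ρ else 1)
              * (∑ a, f a * chi (Fin.cons true s') a)^2
          = (∏ i, if s' i then ρ else 1)
              * ((∑ a, f (Fin.cons false a) * chi s' a) + (∑ a, f (Fin.cons true a) * chi s' a))^2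
            + ρ * ((∏ i, if s' i then ρ else 1)
              * ((∑ a, f (Fin.cons false a) * chi s' a) - (∑ a, f (Fin.cons true a) * chi s' a))^2) := by
        intro s'
        have W0 : (∏ i : Fin (d+1), if (Fin.cons false s' : Fin (d+1) → Bool) i then ρ else 1)
            = ∏ i : Fin d, if s' i then ρ else 1 := by
          rw [Fin.prod_univ_succ]; simp
        have W1 : (∏ i : Fin (d+1), if (Fin.cons true s' : Fin (d+1) → Bool) i then ρ else 1)
            = ρ * ∏ i : Fin d, if s' i then ρ else 1 := by
          rw [Fin.prod_univ_succ]; simp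
        have C0 : ∑ a, f a * chi (Fin.cons false s') a
            = (∑ a, f (Fin.cons false a) * chi s' a) + (∑ a, f (Fin.cons true a) * chi s' a) := by
          rw [reindex (fun a => f a * chi (Fin.cons false s') a), Finset.sum_add_distrib]
          congr 1 <;>
          · apply Finset.sum_congr rfl
            intro y _
            rw [chi_cons]
            norm_num
        have C1 : ∑ a, f a * chi (Fin.cons true s') a
            = (∑ a, f (Fin.cons false a) * chi s' a) - (∑ a, f (Fin.cons true a) * chi s' a) := by
          rw [reindex (fun a => f a * chi (Fin.cons true s') a), Finset.sum_add_distrib,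
            sub_eq_add_neg, ← Finset.sum_neg_distrib]
          congr 1 <;>
          · apply Finset.sum_congr rfl
            intro y _
            rw [chi_cons]
            norm_num
        rw [W0, W1, C0, C1]
        ring
      rw [reindex (fun s => (∏ i, if s i then ρ else 1) * (∑ a, f a * chi s a)^2)]
      rw [Finset.sum_congr rfl (fun s' _ => TF s')]
      have hstep := step_sum (ι := Fin d → Bool) h0 h1
        (W := fun s' => ∏ i, if s' i then ρ else 1)
        (c0 := fun s' => ∑ a, f (Fin.cons false a) * chi s' a)
        (c1 := fun s' => ∑ a, f (Fin.cons true a) * chi s' a)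
        hWnn hm0 hm1 (E := (2-2/(1+ρ))*(d:ℝ))
        (ih (fun a => f (Fin.cons false a)) (fun a => hf _))
        (ih (fun a => f (Fin.cons true a)) (fun a => hf _))
      have hE : (2-2/(1+ρ))*(d:ℝ) + (2-2/(1+ρ)) = (2-2/(1+ρ))*((d+1:ℕ):ℝ) := by
        push_cast
        ring
      have hm : (∑ a : Fin (d+1) → Bool, f a ^ (1+ρ))
          = (∑ a : Fin d → Bool, f (Fin.cons false a) ^ (1+ρ))
            + (∑ a : Fin d → Bool, f (Fin.cons true a) ^ (1+ρ)) := by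
        rw [reindex (fun a => f a ^ (1+ρ)), Finset.sum_add_distrib]
      rw [hm, ← hE]
      exact hstep

end WalkAux

open WalkAux

/-- Random walk lemma: if `r` is odd and `B ⊆ {0,1}^d` is nonempty, the probability that an
`r`-step standard random walk started at a uniform point of `B` ends in `B` is at most
`(|B|/2^d)^{(e^{2r/d}-1)/(e^{2r/d}+1)}`. -/
theorem walk_return_probability (d r : ℕ) (hd : 0 < d) (hr : Odd r) (hr0 : 0 < r)
    (B : Finset (Fin d → Bool)) (hB : B.Nonempty) :
    (1 / (B.card : ℝ)) * ∑ a ∈ B, ∑ b ∈ B, (walkMatrix d ^ r) a b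
      ≤ ((B.card : ℝ) / 2 ^ d) ^
          ((Real.exp (2 * r / d) - 1) / (Real.exp (2 * r / d) + 1)) := by
  have hdR : (0:ℝ) < d := by exact_mod_cast hd
  set ρ : ℝ := Real.exp (-(2 * (r:ℝ) / (d:ℝ))) with hρdef
  have hρ0 : 0 < ρ := Real.exp_pos _
  have hρ1 : ρ < 1 := by
    rw [hρdef, Real.exp_lt_one_iff]
    have hrR : (0:ℝ) < r := by exact_mod_cast hr0
    have : (0:ℝ) < 2 * (r:ℝ) / d := by positivity
    linarith
  have hp0 : (0:ℝ) < 1 + ρ := by linarith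
  set N : ℝ := (B.card : ℝ) with hN
  have hNpos : (0:ℝ) < N := by
    rw [hN]
    exact_mod_cast Finset.card_pos.mpr hB
  have h2d : (0:ℝ) < (2:ℝ)^d := by positivity
  -- eigenvalue bound
  have heig : ∀ s : Fin d → Bool,
      (((d:ℝ) - 2 * wt s) / d) ^ r ≤ ∏ i, (if s i then ρ else 1) := by
    intro s
    have hWeq : (∏ i, (if s i then ρ else 1)) = ρ ^ wt s := by
      rw [Finset.prod_ite, Finset.prod_const, Finset.prod_const, one_pow, mul_one]
      rfl
    rw [hWeq]
    by_cases hneg : (0:ℝ) ≤ ((d:ℝ) - 2 * wt s) / d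
    · have hle : ((d:ℝ) - 2 * wt s) / d ≤ Real.exp (-(2 * (wt s : ℝ) / d)) := by
        have := Real.add_one_le_exp (-(2 * (wt s : ℝ) / d))
        have heq : ((d:ℝ) - 2 * wt s) / d = -(2 * (wt s : ℝ) / d) + 1 := by
          field_simp
          ring
        rw [heq]
        exact this
      calc (((d:ℝ) - 2 * wt s) / d) ^ r ≤ (Real.exp (-(2 * (wt s : ℝ) / d))) ^ r :=
            pow_le_pow_left₀ hneg hle r
        _ = ρ ^ wt s := by
            rw [← Real.exp_nat_mul, hρdef, ← Real.exp_nat_mul]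
            congr 1
            push_cast
            ring
    · push_neg at hneg
      calc (((d:ℝ) - 2 * wt s) / d) ^ r ≤ 0 := Odd.pow_nonpos hr hneg.le
        _ ≤ ρ ^ wt s := pow_nonneg hρ0.le _
  -- spectral decomposition and pointwise bound
  have hdec := WalkAux.decomp hd r B
  have hmono : ∑ s : Fin d → Bool, (((d:ℝ) - 2 * wt s) / d) ^ r * (∑ a ∈ B, chi s a)^2
      ≤ ∑ s : Fin d → Bool, (∏ i, (if s i then ρ else 1)) * (∑ a ∈ B, chi s a)^2 :=
    Finset.sum_le_sum (fun s _ => mul_le_mul_of_nonneg_right (heig s) (sq_nonneg _))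
  -- hypercontractivity with the indicator of B
  have hind := WalkAux.hyper hρ0.le hρ1.le d (fun a => if a ∈ B then (1:ℝ) else 0)
    (fun a => by split <;> norm_num)
  have hc : ∀ s : Fin d → Bool,
      ∑ a, (if a ∈ B then (1:ℝ) else 0) * chi s a = ∑ a ∈ B, chi s a := by
    intro s
    simp only [ite_mul, one_mul, zero_mul]
    rw [Finset.sum_ite_mem, Finset.univ_inter]
  have hcard : ∑ a, (if a ∈ B then (1:ℝ) else 0) ^ (1+ρ) = N := by
    have hterm : ∀ a, (if a ∈ B then (1:ℝ) else 0) ^ (1+ρ) = if a ∈ B then (1:ℝ) else 0 := by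
      intro a
      split
      · exact Real.one_rpow _
      · exact Real.zero_rpow (ne_of_gt hp0)
    simp_rw [hterm]
    rw [Finset.sum_ite_mem, Finset.univ_inter, Finset.sum_const, nsmul_eq_mul, mul_one, hN]
  rw [hcard] at hind
  simp_rw [hc] at hind
  -- combine
  have chain : ∑ a ∈ B, ∑ b ∈ B, (walkMatrix d ^ r) a b
      ≤ ((2:ℝ)^d)⁻¹ * ((2:ℝ) ^ ((2 - 2/(1+ρ)) * (d:ℝ)) * N ^ (2/(1+ρ))) := by
    rw [hdec]
    exact mul_le_mul_of_nonneg_left (le_trans hmono hind) (by positivity)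
  have hE : (Real.exp (2 * (r:ℝ) / d) - 1) / (Real.exp (2 * (r:ℝ) / d) + 1)
      = 2/(1+ρ) - 1 := by
    have hx : ρ = (Real.exp (2 * (r:ℝ) / d))⁻¹ := by rw [hρdef, Real.exp_neg]
    have hexp : (0:ℝ) < Real.exp (2 * (r:ℝ) / d) := Real.exp_pos _
    rw [hx]
    field_simp
    ring
  have comb : (2:ℝ)^(-(d:ℝ)) * (2:ℝ)^((2 - 2/(1+ρ)) * (d:ℝ))
      = (2:ℝ)^(-((d:ℝ) * (2/(1+ρ) - 1))) := by
    rw [← Real.rpow_add two_pos]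
    congr 1
    ring
  have final_eq : (1/N) * (((2:ℝ)^d)⁻¹ * ((2:ℝ) ^ ((2 - 2/(1+ρ)) * (d:ℝ)) * N ^ (2/(1+ρ))))
      = (N / 2^d) ^ (2/(1+ρ) - 1) := by
    rw [Real.div_rpow hNpos.le h2d.le, Real.rpow_sub hNpos, Real.rpow_one]
    rw [show ((2:ℝ)^d) = (2:ℝ)^((d:ℕ):ℝ) by rw [Real.rpow_natCast]]
    rw [← Real.rpow_mul (by norm_num : (0:ℝ) ≤ 2), ← Real.rpow_neg (by norm_num : (0:ℝ) ≤ 2)]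
    calc (1/N) * ((2:ℝ)^(-((d:ℕ):ℝ)) * ((2:ℝ) ^ ((2 - 2/(1+ρ)) * (d:ℝ)) * N ^ (2/(1+ρ))))
        = ((2:ℝ)^(-((d:ℕ):ℝ)) * (2:ℝ)^((2 - 2/(1+ρ)) * (d:ℝ))) * (N ^ (2/(1+ρ)) * (1/N)) := by
          ring
      _ = (2:ℝ)^(-((d:ℝ) * (2/(1+ρ) - 1))) * (N ^ (2/(1+ρ)) * (1/N)) := by rw [comb]
      _ = N ^ (2/(1+ρ)) / N / (2:ℝ)^((d:ℝ) * (2/(1+ρ) - 1)) := by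
          rw [Real.rpow_neg (by norm_num : (0:ℝ) ≤ 2)]
          ring
  calc (1 / N) * ∑ a ∈ B, ∑ b ∈ B, (walkMatrix d ^ r) a b
      ≤ (1/N) * (((2:ℝ)^d)⁻¹ * ((2:ℝ) ^ ((2 - 2/(1+ρ)) * (d:ℝ)) * N ^ (2/(1+ρ)))) :=
        mul_le_mul_of_nonneg_left chain (by positivity)
    _ = (N / 2^d) ^ (2/(1+ρ) - 1) := final_eq
    _ = (N / 2^d) ^ ((Real.exp (2 * (r:ℝ) / d) - 1) / (Real.exp (2 * (r:ℝ) / d) + 1)) := by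
        rw [hE]
end

section
/- For every a ≥ 0 and positive integer d, Σ_{0 ≤ k ≤ d/2 - a} C(d,k) ≤ 2^d · e^{-a²/d}. -/
open Finset

/-- Chernoff-type tail bound for binomial coefficients:
`∑_{0 ≤ k ≤ d/2 - a} C(d,k) ≤ 2^d e^{-a²/d}`. -/
theorem binomial_tail_bound (d : ℕ) (hd : 0 < d) (a : ℝ) (ha : 0 ≤ a) :
    ∑ k ∈ (range (d + 1)).filter (fun k : ℕ => (k : ℝ) ≤ d / 2 - a), (d.choose k : ℝ)
      ≤ 2 ^ d * Real.exp (-(a ^ 2 / d)) := by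
  have hd' : (0:ℝ) < d := by exact_mod_cast hd
  set t : ℝ := 4 * a / d with ht
  have hta : 0 ≤ t := by positivity
  -- Step 1: insert exponential weights
  have key : ∑ k ∈ (range (d + 1)).filter (fun k : ℕ => (k : ℝ) ≤ d / 2 - a), (d.choose k : ℝ)
      ≤ ∑ k ∈ range (d + 1), (d.choose k : ℝ) * Real.exp (t * (d / 2 - a - k)) := by
    calc ∑ k ∈ (range (d + 1)).filter (fun k : ℕ => (k : ℝ) ≤ d / 2 - a), (d.choose k : ℝ)
        ≤ ∑ k ∈ (range (d + 1)).filter (fun k : ℕ => (k : ℝ) ≤ d / 2 - a),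
            (d.choose k : ℝ) * Real.exp (t * (d / 2 - a - k)) := by
          apply sum_le_sum
          intro k hk
          simp only [mem_filter] at hk
          have h1 : (1:ℝ) ≤ Real.exp (t * (d / 2 - a - k)) := by
            rw [Real.one_le_exp_iff]
            have : (0:ℝ) ≤ d / 2 - a - k := by linarith [hk.2]
            positivity
          exact le_mul_of_one_le_right (by positivity) h1
      _ ≤ _ := by
          apply sum_le_sum_of_subset_of_nonneg (filter_subset _ _)
          intro i _ _
          positivity
  -- Step 2: closed form via binomial theorem
  have hsum : ∑ k ∈ range (d + 1), (d.choose k : ℝ) * Real.exp (t * (d / 2 - a - k))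
      = Real.exp (t * (d / 2 - a)) * (Real.exp (-t) + 1) ^ d := by
    rw [add_pow, Finset.mul_sum]
    apply Finset.sum_congr rfl
    intro k hk
    rw [one_pow, mul_one, ← Real.exp_nat_mul, ← mul_assoc, ← Real.exp_add, mul_comm]
    congr 1
    ring
  -- Step 3: 1 + exp(-t) ≤ 2 exp(t²/8 - t/2)
  have hcosh := Real.cosh_le_exp_half_sq (t / 2)
  rw [Real.cosh_eq] at hcosh
  have e1 : Real.exp (-(t/2)) * Real.exp (t/2) = 1 := by
    rw [← Real.exp_add]; simp
  have e2 : Real.exp (-(t/2)) * Real.exp (-(t/2)) = Real.exp (-t) := by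
    rw [← Real.exp_add]; ring_nf
  have e3 : Real.exp (-(t/2)) * Real.exp ((t/2)^2/2) = Real.exp (t^2/8 - t/2) := by
    rw [← Real.exp_add]; ring_nf
  have hc : Real.exp (-t) + 1 ≤ 2 * Real.exp (t^2/8 - t/2) := by
    nlinarith [Real.exp_pos (-(t/2))]
  -- Step 4: combine
  have hpow : (Real.exp (-t) + 1) ^ d ≤ (2 * Real.exp (t^2/8 - t/2)) ^ d := by
    apply pow_le_pow_left₀ (by positivity) hc
  have hfinal : Real.exp (t * (d / 2 - a)) * (2 * Real.exp (t^2/8 - t/2)) ^ d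
      = 2 ^ d * Real.exp (t * (d / 2 - a) + d * (t^2/8 - t/2)) := by
    rw [mul_pow, ← Real.exp_nat_mul, Real.exp_add]
    ring
  have hexp : t * (d / 2 - a) + d * (t^2/8 - t/2) = -(2 * a^2 / d) := by
    rw [ht]; field_simp; ring
  have hmono : Real.exp (-(2 * a^2 / d)) ≤ Real.exp (-(a^2 / d)) := by
    apply Real.exp_le_exp.2
    have h0 : 0 ≤ a^2 / d := by positivity
    have h2 : 2 * a^2 / d = a^2/d + a^2/d := by ring
    linarith
  calc ∑ k ∈ (range (d + 1)).filter (fun k : ℕ => (k : ℝ) ≤ d / 2 - a), (d.choose k : ℝ)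
      ≤ Real.exp (t * (d / 2 - a)) * (Real.exp (-t) + 1) ^ d := by rw [← hsum]; exact key
    _ ≤ Real.exp (t * (d / 2 - a)) * (2 * Real.exp (t^2/8 - t/2)) ^ d := by
        apply mul_le_mul_of_nonneg_left hpow (le_of_lt (Real.exp_pos _))
    _ = 2 ^ d * Real.exp (-(2 * a^2 / d)) := by rw [hfinal, hexp]
    _ ≤ 2 ^ d * Real.exp (-(a ^ 2 / d)) := by
        apply mul_le_mul_of_nonneg_left hmono (by positivity)
end
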